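/- Let J : (0, ∞) → ℝ be C¹ with J(U) > 0 and J'(U) ≤ 0 for all U > 0. For P > 0 let U_P solve U'' = −J(U), U(0) = 0, U'(0) = P, and let x(P) > 0 be the smallest positive point with U_P'(x(P)) = 0 (assumed to exist for P in the relevant range, with U_P > 0 and increasing on (0, x(P))). Then x(P) is strictly increasing in P: if 0 < P₁ < P₂ and both x(P₁), x(P₂) exist, then x(P₁) < x(P₂). -/

import Mathlib

/-!
Suppose `x₂ ≤ x₁`. The slope gap `U₂' - U₁'` starts at `P₂ - P₁ > 0`. As long as it stays
positive, `U₂ ≥ U₁ > 0`, so `J(U₂) ≤ J(U₁)` since `J` is nonincreasing, and then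
`(U₂' - U₁')' = J(U₁) - J(U₂) ≥ 0`: the gap cannot shrink. Hence it never reaches `0`, so
`U₁'(x₂) < U₂'(x₂) = 0`, whereas `U₁' ≥ 0` on `[0, x₁]`.
-/

open Set

theorem exists_first_nonpos {g : ℝ → ℝ} {a b : ℝ} (hg : ContinuousOn g (Icc a b))
    (ha : 0 < g a) (hb : g b ≤ 0) (hab : a ≤ b) :
    ∃ t ∈ Ioc a b, g t ≤ 0 ∧ ∀ x ∈ Ico a t, 0 < g x := by
  have hclosed : IsClosed (Icc a b ∩ g ⁻¹' Iic 0) :=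
    hg.preimage_isClosed_of_isClosed isClosed_Icc isClosed_Iic
  obtain ⟨t, ⟨htab, hgt⟩, hleast⟩ :=
    (isCompact_Icc.of_isClosed_subset hclosed inter_subset_left).exists_isLeast
      ⟨b, ⟨hab, le_rfl⟩, hb⟩
  have hat : a < t := htab.1.lt_of_ne fun h => (h ▸ hgt : g a ≤ 0).not_gt ha
  refine ⟨t, ⟨hat, htab.2⟩, hgt, fun x hx => ?_⟩
  by_contra! hgx
  exact (hleast ⟨⟨hx.1, hx.2.le.trans htab.2⟩, hgx⟩).not_gt hx.2

theorem monotoneOn_sub_of_deriv_le {f g : ℝ → ℝ} {a b : ℝ}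
    (hf : ContinuousOn f (Icc a b)) (hg : ContinuousOn g (Icc a b))
    (hf' : DifferentiableOn ℝ f (Ioo a b)) (hg' : DifferentiableOn ℝ g (Ioo a b))
    (h : ∀ x ∈ Ioo a b, deriv f x ≤ deriv g x) :
    MonotoneOn (fun x => g x - f x) (Icc a b) := by
  refine monotoneOn_of_deriv_nonneg (convex_Icc a b) (hg.sub hf) ?_ fun x hx => ?_
  · rw [interior_Icc]; exact hg'.sub hf'
  · rw [interior_Icc] at hx
    have hfx := hf'.differentiableAt (isOpen_Ioo.mem_nhds hx)
    have hgx := hg'.differentiableAt (isOpen_Ioo.mem_nhds hx)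
    rw [deriv_fun_sub hgx hfx, sub_nonneg]
    exact h x hx

theorem deriv_lt_deriv_of_antitoneOn_force {J U₁ U₂ : ℝ → ℝ} {T : ℝ}
    (hJ : AntitoneOn J (Ioi 0)) (hU₁ : ContDiff ℝ 2 U₁) (hU₂ : ContDiff ℝ 2 U₂)
    (heq₁ : ∀ x ∈ Ioo 0 T, deriv (deriv U₁) x = -J (U₁ x))
    (heq₂ : ∀ x ∈ Ioo 0 T, deriv (deriv U₂) x = -J (U₂ x))
    (h0 : U₁ 0 = U₂ 0) (h0' : deriv U₁ 0 < deriv U₂ 0)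
    (hpos₁ : ∀ x ∈ Ioo 0 T, 0 < U₁ x) (hT : 0 ≤ T) :
    deriv U₁ T < deriv U₂ T := by
  have hd₁ := hU₁.differentiable_deriv_two
  have hd₂ := hU₂.differentiable_deriv_two
  by_contra! hgap
  obtain ⟨t, ⟨ht0, htT⟩, hgapt, hgap_pos⟩ :=
    exists_first_nonpos (g := fun x => deriv U₂ x - deriv U₁ x)
      (hd₂.continuous.sub hd₁.continuous).continuousOn (sub_pos.2 h0') (sub_nonpos.2 hgap) hT
  have hU_le : ∀ x ∈ Icc 0 t, U₁ x ≤ U₂ x := by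
    have hmono := monotoneOn_sub_of_deriv_le (hU₁.continuous.continuousOn)
      (hU₂.continuous.continuousOn) (hU₁.differentiable two_ne_zero).differentiableOn
      (hU₂.differentiable two_ne_zero).differentiableOn
      fun x hx => (sub_pos.1 (hgap_pos x ⟨hx.1.le, hx.2⟩)).le
    intro x hx
    simpa [h0] using hmono (left_mem_Icc.2 ht0.le) hx hx.1
  have hgap_mono := monotoneOn_sub_of_deriv_le hd₁.continuous.continuousOn
    hd₂.continuous.continuousOn hd₁.differentiableOn hd₂.differentiableOn fun x hx => by
      have hxT : x ∈ Ioo 0 T := ⟨hx.1, hx.2.trans_le htT⟩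
      have hUx := hU_le x (Ioo_subset_Icc_self hx)
      rw [heq₁ x hxT, heq₂ x hxT, neg_le_neg_iff]
      exact hJ (hpos₁ x hxT) ((hpos₁ x hxT).trans_le hUx) hUx
  have := hgap_mono (left_mem_Icc.2 ht0.le) (right_mem_Icc.2 ht0.le) ht0.le
  simp only at this hgapt
  linarith

theorem stmt15_general (J : ℝ → ℝ)
    (hJdiff : DifferentiableOn ℝ J (Set.Ioi 0))
    (hJ' : ∀ U > 0, deriv J U ≤ 0)
    (P₁ P₂ x₁ x₂ : ℝ) (U₁ U₂ : ℝ → ℝ)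
    (hPP : P₁ < P₂)
    (hU₁ : ContDiff ℝ 2 U₁) (hU₂ : ContDiff ℝ 2 U₂)
    (heq₁ : ∀ x ∈ Set.Icc 0 x₁, deriv (deriv U₁) x = -J (U₁ x))
    (heq₂ : ∀ x ∈ Set.Icc 0 x₂, deriv (deriv U₂) x = -J (U₂ x))
    (h₁0 : U₁ 0 = 0) (h₂0 : U₂ 0 = 0)
    (h₁0' : deriv U₁ 0 = P₁) (h₂0' : deriv U₂ 0 = P₂)
    (hx₂ : 0 < x₂)
    (hc₁ : deriv U₁ x₁ = 0) (hc₂ : deriv U₂ x₂ = 0)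
    (hmono₁ : ∀ x ∈ Set.Ioo 0 x₁, 0 < U₁ x ∧ 0 < deriv U₁ x) :
    x₁ < x₂ := by
  by_contra! hx₂₁
  have hJ : AntitoneOn J (Ioi 0) := by
    refine antitoneOn_of_deriv_nonpos (convex_Ioi 0) hJdiff.continuousOn ?_ ?_ <;> rw [interior_Ioi]
    exacts [hJdiff, hJ']
  have hIoo : Ioo 0 x₂ ⊆ Ioo 0 x₁ := Ioo_subset_Ioo_right hx₂₁
  have hslope : deriv U₁ x₂ < deriv U₂ x₂ :=
    deriv_lt_deriv_of_antitoneOn_force hJ hU₁ hU₂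
      (fun x hx => heq₁ x (Ioo_subset_Icc_self (hIoo hx)))
      (fun x hx => heq₂ x (Ioo_subset_Icc_self hx)) (h₁0.trans h₂0.symm) (h₁0' ▸ h₂0' ▸ hPP)
      (fun x hx => (hmono₁ x (hIoo hx)).1) hx₂.le
  have hslope₁ : 0 ≤ deriv U₁ x₂ := by
    rcases hx₂₁.eq_or_lt with h | h
    · rw [h, hc₁]
    · exact (hmono₁ x₂ ⟨hx₂, h⟩).2.le
  linarith

theorem stmt15 (J : ℝ → ℝ)
    (hJdiff : DifferentiableOn ℝ J (Set.Ioi 0))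
    (hJpos : ∀ U > 0, 0 < J U)
    (hJ' : ∀ U > 0, deriv J U ≤ 0)
    (P₁ P₂ x₁ x₂ : ℝ) (U₁ U₂ : ℝ → ℝ)
    (hP : 0 < P₁) (hPP : P₁ < P₂)
    (hU₁ : ContDiff ℝ 2 U₁) (hU₂ : ContDiff ℝ 2 U₂)
    (heq₁ : ∀ x ∈ Set.Icc 0 x₁, deriv (deriv U₁) x = -J (U₁ x))
    (heq₂ : ∀ x ∈ Set.Icc 0 x₂, deriv (deriv U₂) x = -J (U₂ x))
    (h₁0 : U₁ 0 = 0) (h₂0 : U₂ 0 = 0)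
    (h₁0' : deriv U₁ 0 = P₁) (h₂0' : deriv U₂ 0 = P₂)
    (hx₁ : 0 < x₁) (hx₂ : 0 < x₂)
    (hc₁ : deriv U₁ x₁ = 0) (hc₂ : deriv U₂ x₂ = 0)
    (hmono₁ : ∀ x ∈ Set.Ioo 0 x₁, 0 < U₁ x ∧ 0 < deriv U₁ x)
    (hmono₂ : ∀ x ∈ Set.Ioo 0 x₂, 0 < U₂ x ∧ 0 < deriv U₂ x) :
    x₁ < x₂ :=
  stmt15_general J hJdiff hJ' P₁ P₂ x₁ x₂ U₁ U₂ hPP hU₁ hU₂ heq₁ heq₂ h₁0 h₂0 h₁0' h₂0' hx₂ hc₁ hc₂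
    hmono₁
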